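/- A nonnegative tensor A of order m and dimension n has ρ(A) > 0 if and only if A is nontrivially nonnegative, i.e., there exists a nonempty index subset I ⊆ [n] such that the principal sub-tensor A_I is strictly nonnegative. -/

import Mathlib

/-!
If `ρ(A) > 0`, take an eigenpair `(λ, x)` with `λ ≠ 0` and let `I` be the support of `x`: for
`i ∈ I`, `(A x^{m-1})_i = λ x_i^{m-1} ≠ 0` involves only entries of `A_I`, so `A_I e_I^{m-1} > 0`.

Conversely, the normalized indicator of `I` shows that the Collatz–Wielandt value of `A` is at
least `μ = min_{i ∈ I} (A_I e_I^{m-1})_i > 0`. For the positive tensors `A + ε` the maximizer of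
the Collatz–Wielandt value over the simplex is an eigenvector, since otherwise one step of the
power iteration `x ↦ (A x^{m-1})^{[1/(m-1)]}` would improve it. Its eigenvalue lies in `[μ, Λ]`
for a bound `Λ` independent of `ε ≤ 1`, and by compactness these eigenpairs accumulate at an
eigenpair of `A` itself as `ε → 0`.
-/

open Finset

noncomputable section

/-- `(A x^{m-1})_i` for a tensor of order `m'+1` and dimension `n`. -/
def tApply {n m' : ℕ} (A : Fin n → (Fin m' → Fin n) → ℝ) (x : Fin n → ℝ) (i : Fin n) : ℝ :=
  ∑ idx : Fin m' → Fin n, A i idx * ∏ k, x (idx k)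

/-- Complex version of `tApply`. -/
def tApplyC {n m' : ℕ} (A : Fin n → (Fin m' → Fin n) → ℝ) (x : Fin n → ℂ) (i : Fin n) : ℂ :=
  ∑ idx : Fin m' → Fin n, (A i idx : ℂ) * ∏ k, x (idx k)

/-- `lam` is an eigenvalue of the tensor `A`. -/
def IsEig {n m' : ℕ} (A : Fin n → (Fin m' → Fin n) → ℝ) (lam : ℂ) : Prop :=
  ∃ x : Fin n → ℂ, x ≠ 0 ∧ ∀ i, tApplyC A x i = lam * x i ^ m'

/-- The spectral radius of a tensor. -/
def specRad {n m' : ℕ} (A : Fin n → (Fin m' → Fin n) → ℝ) : ℝ :=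
  sSup {r | ∃ lam, IsEig A lam ∧ r = ‖lam‖}

/-- The majorization matrix `M_A` of a tensor `A`. -/
def major {n m' : ℕ} (A : Fin n → (Fin m' → Fin n) → ℝ) (i j : Fin n) : ℝ :=
  ∑ idx ∈ univ.filter (fun idx : Fin m' → Fin n => ∃ k, idx k = j), A i idx

/-- The majorization matrix of the principal sub-tensor `A_I`. -/
def subMajor {n m' : ℕ} (A : Fin n → (Fin m' → Fin n) → ℝ) (I : Finset (Fin n))
    (i j : Fin n) : ℝ :=
  ∑ idx ∈ univ.filter (fun idx : Fin m' → Fin n => (∃ k, idx k = j) ∧ ∀ k, idx k ∈ I),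
    A i idx

/-- Irreducibility of (the principal submatrix on `I` of) a nonnegative matrix. -/
def MatIrredOn {n : ℕ} (M : Fin n → Fin n → ℝ) (I : Finset (Fin n)) : Prop :=
  ∀ S ⊆ I, S.Nonempty → S ≠ I → ∃ i ∈ S, ∃ j ∈ I \ S, M i j ≠ 0

/-- A tensor is weakly irreducible if its majorization matrix is irreducible. -/
def WeaklyIrred {n m' : ℕ} (A : Fin n → (Fin m' → Fin n) → ℝ) : Prop :=
  MatIrredOn (major A) Finset.univ

/-- Weak irreducibility of the principal sub-tensor `A_I`. -/
def WeaklyIrredOn {n m' : ℕ} (A : Fin n → (Fin m' → Fin n) → ℝ) (I : Finset (Fin n)) : Prop :=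
  MatIrredOn (subMajor A I) I

/-- `(A_I e_I^{m-1})_i`, the action of the principal sub-tensor on the all-ones vector. -/
def subApplyOnes {n m' : ℕ} (A : Fin n → (Fin m' → Fin n) → ℝ) (I : Finset (Fin n))
    (i : Fin n) : ℝ :=
  ∑ idx ∈ univ.filter (fun idx : Fin m' → Fin n => ∀ k, idx k ∈ I), A i idx

/-- The spectral radius of the principal sub-tensor `A_I`. -/
def subSpecRad {n m' : ℕ} (A : Fin n → (Fin m' → Fin n) → ℝ) (I : Finset (Fin n)) : ℝ :=
  sSup {r | ∃ lam : ℂ, ∃ x : Fin n → ℂ, (∃ i ∈ I, x i ≠ 0) ∧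
    (∀ i ∈ I, (∑ idx ∈ univ.filter (fun idx : Fin m' → Fin n => ∀ k, idx k ∈ I),
      (A i idx : ℂ) * ∏ k, x (idx k)) = lam * x i ^ m') ∧ r = ‖lam‖}

variable {n m' : ℕ}

lemma ne_zero_of_mem_stdSimplex {𝕜 ι : Type*} [Semiring 𝕜] [PartialOrder 𝕜] [Nontrivial 𝕜]
    [Fintype ι] {x : ι → 𝕜} (hx : x ∈ stdSimplex 𝕜 ι) : x ≠ 0 := by
  rintro rfl
  simpa using hx.2

lemma continuous_tApply (i : Fin n) :
    Continuous fun p : (Fin n → (Fin m' → Fin n) → ℝ) × (Fin n → ℝ) => tApply p.1 p.2 i := by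
  unfold tApply
  fun_prop

lemma tApply_le_tApply_of_le {A B : Fin n → (Fin m' → Fin n) → ℝ}
    (hAB : ∀ i idx, A i idx ≤ B i idx) {x : Fin n → ℝ} (hx : 0 ≤ x) (i : Fin n) :
    tApply A x i ≤ tApply B x i :=
  sum_le_sum fun idx _ => mul_le_mul_of_nonneg_right (hAB i idx) (prod_nonneg fun _ _ => hx _)

lemma tApply_smul (A : Fin n → (Fin m' → Fin n) → ℝ) (c : ℝ) (x : Fin n → ℝ) (i : Fin n) :
    tApply A (c • x) i = c ^ m' * tApply A x i := by
  simp only [tApply, Pi.smul_apply, smul_eq_mul, prod_mul_distrib, prod_const, card_univ,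
    Fintype.card_fin, mul_sum]
  exact sum_congr rfl fun idx _ => by ring

lemma tApply_lt_tApply_of_pos (hm : m' ≠ 0) {B : Fin n → (Fin m' → Fin n) → ℝ}
    (hB : ∀ i idx, 0 < B i idx) {x y : Fin n → ℝ} (hx : 0 ≤ x) (hxy : x ≤ y) {j : Fin n}
    (hj : x j < y j) (i : Fin n) : tApply B x i < tApply B y i := by
  refine sum_lt_sum (fun idx _ => mul_le_mul_of_nonneg_left ?_ (hB i idx).le)
    ⟨fun _ => j, mem_univ _, mul_lt_mul_of_pos_left ?_ (hB i _)⟩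
  · exact prod_le_prod (fun k _ => hx _) fun k _ => hxy _
  · simpa using pow_lt_pow_left₀ hj (hx j) hm

lemma tApply_le_sum_mul_pow {A : Fin n → (Fin m' → Fin n) → ℝ} (hA : ∀ i idx, 0 ≤ A i idx)
    {x : Fin n → ℝ} (hx : 0 ≤ x) {i : Fin n} (hi : ∀ j, x j ≤ x i) :
    tApply A x i ≤ (∑ idx, A i idx) * x i ^ m' := by
  rw [tApply, sum_mul]
  refine sum_le_sum fun idx _ => mul_le_mul_of_nonneg_left ?_ (hA i idx)
  simpa using prod_le_prod (s := univ) (fun k _ => hx (idx k)) fun k _ => hi (idx k)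

lemma le_sum_of_mul_pow_le_tApply {A : Fin n → (Fin m' → Fin n) → ℝ}
    (hA : ∀ i idx, 0 ≤ A i idx) {x : Fin n → ℝ} (hx : 0 ≤ x) (hx0 : x ≠ 0) {lam : ℝ}
    (h : ∀ i, lam * x i ^ m' ≤ tApply A x i) : lam ≤ ∑ i, ∑ idx, A i idx := by
  obtain ⟨j, hj⟩ := Function.ne_iff.1 hx0
  obtain ⟨i, -, hi⟩ := exists_max_image univ x ⟨j, mem_univ j⟩
  have hxi : 0 < x i := (lt_of_le_of_ne (hx j) (Ne.symm hj)).trans_le (hi j (mem_univ j))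
  have hlam : lam ≤ ∑ idx, A i idx :=
    le_of_mul_le_mul_right ((h i).trans (tApply_le_sum_mul_pow hA hx fun j => hi j (mem_univ j)))
      (pow_pos hxi m')
  exact hlam.trans (single_le_sum (fun j _ => sum_nonneg fun idx _ => hA j idx) (mem_univ i))

lemma tApplyC_ofReal (A : Fin n → (Fin m' → Fin n) → ℝ) (x : Fin n → ℝ) (i : Fin n) :
    tApplyC A (fun j => (x j : ℂ)) i = tApply A x i := by
  simp [tApplyC, tApply]

lemma norm_tApplyC_le {A : Fin n → (Fin m' → Fin n) → ℝ} (hA : ∀ i idx, 0 ≤ A i idx)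
    (x : Fin n → ℂ) (i : Fin n) : ‖tApplyC A x i‖ ≤ tApply A (fun j => ‖x j‖) i := by
  refine (norm_sum_le _ _).trans (le_of_eq (sum_congr rfl fun idx _ => ?_))
  rw [norm_mul, norm_prod, Complex.norm_real, Real.norm_of_nonneg (hA i idx)]

lemma norm_le_sum_of_isEig {A : Fin n → (Fin m' → Fin n) → ℝ} (hA : ∀ i idx, 0 ≤ A i idx)
    {lam : ℂ} (h : IsEig A lam) : ‖lam‖ ≤ ∑ i, ∑ idx, A i idx := by
  obtain ⟨x, hx0, hx⟩ := h
  refine le_sum_of_mul_pow_le_tApply hA (fun j => norm_nonneg (x j)) ?_ fun i => ?_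
  · exact fun h => hx0 (funext fun j => norm_eq_zero.1 (congr_fun h j))
  · simpa [hx i] using norm_tApplyC_le hA x i

lemma le_specRad_of_eigenpair {A : Fin n → (Fin m' → Fin n) → ℝ} (hA : ∀ i idx, 0 ≤ A i idx)
    {x : Fin n → ℝ} (hx0 : x ≠ 0) {lam : ℝ} (h : ∀ i, tApply A x i = lam * x i ^ m') :
    lam ≤ specRad A := by
  have hEig : IsEig A lam := by
    refine ⟨fun j => (x j : ℂ), fun h0 => hx0 (funext fun j => ?_), fun i => ?_⟩
    · simpa using congr_fun h0 j
    · rw [tApplyC_ofReal, h i]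
      push_cast
      rfl
  have hbdd : BddAbove {r | ∃ lam, IsEig A lam ∧ r = ‖lam‖} :=
    ⟨_, by rintro r ⟨lam, hlam, rfl⟩; exact norm_le_sum_of_isEig hA hlam⟩
  calc lam ≤ ‖(lam : ℂ)‖ := by simpa using le_abs_self lam
    _ ≤ specRad A := le_csSup hbdd ⟨lam, hEig, rfl⟩

/-- The feasible set of the Collatz–Wielandt characterization of `ρ(A)`, with `x` normalized
to the standard simplex. -/
def subEigenpairs (A : Fin n → (Fin m' → Fin n) → ℝ) : Set ((Fin n → ℝ) × ℝ) :=
  {p | p.1 ∈ stdSimplex ℝ (Fin n) ∧ 0 ≤ p.2 ∧ ∀ i, p.2 * p.1 i ^ m' ≤ tApply A p.1 i}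

lemma subEigenpairs_mono {A B : Fin n → (Fin m' → Fin n) → ℝ}
    (hAB : ∀ i idx, A i idx ≤ B i idx) : subEigenpairs A ⊆ subEigenpairs B :=
  fun _ ⟨hx, hlam, h⟩ => ⟨hx, hlam, fun i => (h i).trans (tApply_le_tApply_of_le hAB hx.1 i)⟩

lemma isCompact_subEigenpairs {A : Fin n → (Fin m' → Fin n) → ℝ} (hA : ∀ i idx, 0 ≤ A i idx) :
    IsCompact (subEigenpairs A) := by
  have hclosed : IsClosed (subEigenpairs A) := by
    simp only [subEigenpairs, Set.ofPred_and, Set.ofPred_forall]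
    refine (isClosed_stdSimplex ℝ (Fin n) |>.preimage continuous_fst).inter
      ((isClosed_le continuous_const continuous_snd).inter (isClosed_iInter fun i => ?_))
    exact isClosed_le (by fun_prop)
      ((continuous_tApply i).comp (continuous_const.prodMk continuous_fst))
  refine (isCompact_stdSimplex ℝ (Fin n) |>.prod (isCompact_Icc (a := 0)
    (b := ∑ i, ∑ idx, A i idx))).of_isClosed_subset hclosed ?_
  rintro ⟨x, lam⟩ ⟨hx, hlam, h⟩
  exact ⟨hx, hlam, le_sum_of_mul_pow_le_tApply hA hx.1 (ne_zero_of_mem_stdSimplex hx) h⟩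

lemma exists_gt_forall_mul_le_of_forall_mul_lt {ι : Type*} [Finite ι] {a : ℝ} {f g : ι → ℝ}
    (h : ∀ i, a * f i < g i) : ∃ b > a, ∀ i, b * f i ≤ g i := by
  have hev : ∀ᶠ b in nhds a, ∀ i, b * f i < g i := Filter.eventually_all.2 fun i =>
    (continuous_id.mul continuous_const).tendsto a |>.eventually (gt_mem_nhds (h i))
  obtain ⟨b, hb, hab⟩ := ((hev.filter_mono nhdsWithin_le_nhds).and
    (self_mem_nhdsWithin (s := Set.Ioi a))).exists
  exact ⟨b, hab, fun i => (hb i).le⟩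

lemma tApply_pos_of_pos (hm : m' ≠ 0) {B : Fin n → (Fin m' → Fin n) → ℝ}
    (hB : ∀ i idx, 0 < B i idx) {x : Fin n → ℝ} (hx : 0 ≤ x) (hx0 : x ≠ 0) (i : Fin n) :
    0 < tApply B x i := by
  obtain ⟨j, hj⟩ := Function.ne_iff.1 hx0
  have h := tApply_lt_tApply_of_pos hm hB le_rfl hx (lt_of_le_of_ne (hx j) (Ne.symm hj)) i
  simpa [tApply, hm] using h

/-- The Perron step: replacing `x` by `(B x^{m-1})^{[1/(m-1)]}` strictly raises the
Collatz–Wielandt value of a positive tensor unless `x` is already an eigenvector. -/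
lemma exists_mem_subEigenpairs_gt (hm : m' ≠ 0) {B : Fin n → (Fin m' → Fin n) → ℝ}
    (hB : ∀ i idx, 0 < B i idx) {x : Fin n → ℝ} {lam : ℝ} (hp : (x, lam) ∈ subEigenpairs B)
    {j : Fin n} (hj : lam * x j ^ m' < tApply B x j) :
    ∃ q ∈ subEigenpairs B, lam < q.2 := by
  obtain ⟨hx, hlam, h⟩ := hp
  have hBx := tApply_pos_of_pos hm hB hx.1 (ne_zero_of_mem_stdSimplex hx)
  set y : Fin n → ℝ := fun i => tApply B x i ^ (m' : ℝ)⁻¹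
  have hy : ∀ i, 0 < y i := fun i => Real.rpow_pos_of_pos (hBx i) _
  have hym : ∀ i, y i ^ m' = tApply B x i := fun i => Real.rpow_inv_natCast_pow (hBx i).le hm
  set c : ℝ := lam ^ (m' : ℝ)⁻¹
  have hc : 0 ≤ c := Real.rpow_nonneg hlam _
  have hcm : c ^ m' = lam := Real.rpow_inv_natCast_pow hlam hm
  have hcx : 0 ≤ c • x := smul_nonneg hc hx.1
  have hcxy : c • x ≤ y := fun i => (pow_le_pow_iff_left₀ (hcx i) (hy i).le hm).1 <| by
    simpa [mul_pow, hcm, hym] using h i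
  have hcxyj : (c • x) j < y j := (pow_lt_pow_iff_left₀ (hcx j) (hy j).le hm).1 <| by
    simpa [mul_pow, hcm, hym] using hj
  have hlt : ∀ i, lam * y i ^ m' < tApply B y i := fun i => by
    simpa [tApply_smul, hcm, hym] using tApply_lt_tApply_of_pos hm hB hcx hcxy hcxyj i
  obtain ⟨lam', hlam', hle⟩ := exists_gt_forall_mul_le_of_forall_mul_lt hlt
  have hs : 0 < ∑ i, y i := sum_pos (fun i _ => hy i) ⟨j, mem_univ j⟩
  refine ⟨((∑ i, y i)⁻¹ • y, lam'), ⟨⟨fun i => ?_, ?_⟩, hlam.trans hlam'.le, fun i => ?_⟩, hlam'⟩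
  · exact mul_nonneg (inv_nonneg.2 hs.le) (hy i).le
  · simp [← mul_sum, hs.ne']
  · simp only [tApply_smul, Pi.smul_apply, smul_eq_mul, mul_pow]
    rw [mul_left_comm]
    exact mul_le_mul_of_nonneg_left (hle i) (by positivity)

lemma exists_eigenpair_of_pos (hm : m' ≠ 0) {B : Fin n → (Fin m' → Fin n) → ℝ}
    (hB : ∀ i idx, 0 < B i idx) {x₀ : Fin n → ℝ} {μ : ℝ} (hp : (x₀, μ) ∈ subEigenpairs B) :
    ∃ x ∈ stdSimplex ℝ (Fin n), ∃ lam ≥ μ, ∀ i, tApply B x i = lam * x i ^ m' := by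
  obtain ⟨⟨x, lam⟩, hmem, hmax⟩ := (isCompact_subEigenpairs fun i idx => (hB i idx).le)
    |>.exists_isMaxOn ⟨_, hp⟩ continuous_snd.continuousOn
  refine ⟨x, hmem.1, lam, hmax hp, fun i => ?_⟩
  by_contra hne
  obtain ⟨q, hq, hlt⟩ := exists_mem_subEigenpairs_gt hm hB hmem
    (lt_of_le_of_ne (hmem.2.2 i) (Ne.symm hne))
  exact (hmax hq).not_gt hlt

/-- The eigenpairs of the positive perturbations `A + ε` form a compact family in `ε ∈ [0, 1]`,
so one of them survives at `ε = 0`. -/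
lemma exists_eigenpair_of_nonneg (hm : m' ≠ 0) {A : Fin n → (Fin m' → Fin n) → ℝ}
    (hA : ∀ i idx, 0 ≤ A i idx) {x₀ : Fin n → ℝ} {μ : ℝ} (hp : (x₀, μ) ∈ subEigenpairs A) :
    ∃ x ∈ stdSimplex ℝ (Fin n), ∃ lam ≥ μ, ∀ i, tApply A x i = lam * x i ^ m' := by
  set Λ := ∑ i, ∑ idx, (A i idx + 1)
  set E : Set (ℝ × (Fin n → ℝ) × ℝ) := Set.Icc 0 1 ×ˢ (stdSimplex ℝ (Fin n) ×ˢ Set.Icc μ Λ) ∩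
    {q | ∀ i, tApply (fun i idx => A i idx + q.1) q.2.1 i = q.2.2 * q.2.1 i ^ m'}
  have hE : IsCompact E := by
    refine (isCompact_Icc.prod ((isCompact_stdSimplex ℝ _).prod isCompact_Icc)).inter_right ?_
    simp only [Set.ofPred_forall]
    exact isClosed_iInter fun i => isClosed_eq ((continuous_tApply i).comp
      (f := fun q : ℝ × (Fin n → ℝ) × ℝ => (fun i idx => A i idx + q.1, q.2.1)) (by fun_prop))
      (by fun_prop)
  have hperturbed : Set.Ioc 0 1 ⊆ Prod.fst '' E := by
    intro ε ⟨hε, hε1⟩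
    have hAε : ∀ i idx, A i idx ≤ A i idx + ε := fun _ _ => le_add_of_nonneg_right hε.le
    obtain ⟨x, hx, lam, hlam, heig⟩ := exists_eigenpair_of_pos hm
      (fun i idx => add_pos_of_nonneg_of_pos (hA i idx) hε) (subEigenpairs_mono hAε hp)
    have hlamΛ : lam ≤ Λ :=
      (le_sum_of_mul_pow_le_tApply (fun i idx => (hA i idx).trans (hAε i idx)) hx.1
        (ne_zero_of_mem_stdSimplex hx) fun i => (heig i).ge).trans <|
      sum_le_sum fun i _ => sum_le_sum fun idx _ => by linarith
    exact ⟨(ε, x, lam), ⟨⟨⟨hε.le, hε1⟩, hx, hlam, hlamΛ⟩, heig⟩, rfl⟩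
  have h0 : (0 : ℝ) ∈ Prod.fst '' E := by
    refine (hE.image continuous_fst).isClosed.closure_subset_iff.2 hperturbed ?_
    rw [closure_Ioc zero_ne_one]
    exact ⟨le_rfl, zero_le_one⟩
  obtain ⟨⟨ε, x, lam⟩, ⟨⟨-, hx, hlam, -⟩, heig⟩, rfl : ε = 0⟩ := h0
  exact ⟨x, hx, lam, hlam, by simpa using heig⟩

lemma tApply_ite_mem (A : Fin n → (Fin m' → Fin n) → ℝ) (I : Finset (Fin n)) (c : ℝ)
    (i : Fin n) : tApply A (fun j => if j ∈ I then c else 0) i = subApplyOnes A I i * c ^ m' := by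
  rw [tApply, subApplyOnes, sum_mul, sum_filter]
  refine sum_congr rfl fun idx _ => ?_
  split_ifs with hidx
  · simp [hidx]
  · obtain ⟨k, hk⟩ := not_forall.1 hidx
    rw [prod_eq_zero (mem_univ k) (if_neg hk), mul_zero]

lemma exists_subEigenpairs_of_subApplyOnes_pos (hm : m' ≠ 0)
    {A : Fin n → (Fin m' → Fin n) → ℝ} (hA : ∀ i idx, 0 ≤ A i idx) {I : Finset (Fin n)}
    (hI : I.Nonempty) (hpos : ∀ i ∈ I, 0 < subApplyOnes A I i) :
    ∃ x μ, 0 < μ ∧ (x, μ) ∈ subEigenpairs A := by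
  obtain ⟨i₀, hi₀, hmin⟩ := exists_min_image I (subApplyOnes A I) hI
  have hcard : (0 : ℝ) < I.card := by exact_mod_cast card_pos.2 hI
  refine ⟨fun j => if j ∈ I then (I.card : ℝ)⁻¹ else 0, _, hpos i₀ hi₀, ⟨⟨fun j => ?_, ?_⟩,
    (hpos i₀ hi₀).le, fun i => ?_⟩⟩ <;> dsimp only
  · split_ifs <;> positivity
  · simp [sum_ite_mem, hcard.ne']
  · rw [tApply_ite_mem]
    split_ifs with hi
    · exact mul_le_mul_of_nonneg_right (hmin i hi) (by positivity)
    · rw [zero_pow hm, mul_zero]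
      exact mul_nonneg (sum_nonneg fun idx _ => hA i idx) (by positivity)

lemma exists_isEig_ne_zero_of_specRad_pos {A : Fin n → (Fin m' → Fin n) → ℝ}
    (h : 0 < specRad A) : ∃ lam, IsEig A lam ∧ lam ≠ 0 := by
  have hne : {r | ∃ lam, IsEig A lam ∧ r = ‖lam‖}.Nonempty := by
    by_contra hempty
    rw [Set.not_nonempty_iff_eq_empty] at hempty
    simp [specRad, hempty] at h
  obtain ⟨_, ⟨lam, hlam, rfl⟩, hpos⟩ := exists_lt_of_lt_csSup hne h
  exact ⟨lam, hlam, norm_pos_iff.1 hpos⟩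

/-- Entries of `A` with an index outside the support of `x` do not contribute to `A x^{m-1}`. -/
lemma subApplyOnes_support_pos {A : Fin n → (Fin m' → Fin n) → ℝ} (hA : ∀ i idx, 0 ≤ A i idx)
    {x : Fin n → ℂ} {lam : ℂ} (hx : ∀ i, tApplyC A x i = lam * x i ^ m') (hlam : lam ≠ 0)
    {i : Fin n} (hi : x i ≠ 0) : 0 < subApplyOnes A (univ.filter (x · ≠ 0)) i := by
  refine (sum_nonneg fun idx _ => hA i idx).lt_of_ne fun hzero => ?_
  have hterm : ∀ idx : Fin m' → Fin n, (A i idx : ℂ) * ∏ k, x (idx k) = 0 := fun idx => by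
    by_cases hidx : ∀ k, x (idx k) ≠ 0
    · have := (sum_eq_zero_iff_of_nonneg fun idx _ => hA i idx).1 hzero.symm idx (by simpa)
      simp [this]
    · obtain ⟨k, hk⟩ := not_forall_not.1 hidx
      rw [prod_eq_zero (mem_univ k) hk, mul_zero]
  have h0 : tApplyC A x i = 0 := sum_eq_zero fun idx _ => hterm idx
  rw [hx i] at h0
  exact mul_ne_zero hlam (pow_ne_zero m' hi) h0

theorem positive_spectral_radius_iff_general {n m' : ℕ} (hm : 1 ≤ m')
    (A : Fin n → (Fin m' → Fin n) → ℝ)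
    (hA : ∀ i idx, 0 ≤ A i idx) :
    0 < specRad A ↔
      ∃ I : Finset (Fin n), I.Nonempty ∧ ∀ i ∈ I, 0 < subApplyOnes A I i := by
  have hm0 : m' ≠ 0 := Nat.one_le_iff_ne_zero.1 hm
  constructor
  · intro h
    obtain ⟨lam, ⟨x, hx0, hx⟩, hlam⟩ := exists_isEig_ne_zero_of_specRad_pos h
    obtain ⟨j, hj⟩ := Function.ne_iff.1 hx0
    exact ⟨univ.filter (x · ≠ 0), ⟨j, by simpa using hj⟩,
      fun i hi => subApplyOnes_support_pos hA hx hlam (mem_filter.1 hi).2⟩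
  · rintro ⟨I, hI, hpos⟩
    obtain ⟨x₀, μ, hμ, hp⟩ := exists_subEigenpairs_of_subApplyOnes_pos hm0 hA hI hpos
    obtain ⟨x, hx, lam, hlam, heig⟩ := exists_eigenpair_of_nonneg hm0 hA hp
    exact hμ.trans_le (hlam.trans (le_specRad_of_eigenpair hA (ne_zero_of_mem_stdSimplex hx) heig))

/-- positive spectral radius iff nontrivially nonnegative. -/
theorem positive_spectral_radius_iff {n m' : ℕ} (hm : 1 ≤ m') (hn : 1 ≤ n)
    (A : Fin n → (Fin m' → Fin n) → ℝ)
    (hA : ∀ i idx, 0 ≤ A i idx) :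
    0 < specRad A ↔
      ∃ I : Finset (Fin n), I.Nonempty ∧ ∀ i ∈ I, 0 < subApplyOnes A I i :=
  positive_spectral_radius_iff_general hm A hA
end
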